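/- Assume r ≤ K_λ, where r = rank(A). On the event {2 d_1²(PE) ≤ λ σ̂²}, one has the two-sided bound σ̂² ≤ σ̂_r² ≤ (nm/(nm − λr)) · σ̂². -/

import Mathlib

open scoped BigOperators NNReal ENNReal
open Classical MeasureTheory ProbabilityTheory

noncomputable section

/-- Squared Frobenius (Hilbert–Schmidt) norm of a real matrix. -/
def frob2 {n m : ℕ} (M : Matrix (Fin n) (Fin m) ℝ) : ℝ :=
  ∑ i, ∑ j, (M i j) ^ 2

/-- `sval M k` is the `k`-th largest singular value of `M` (1-based indexing),
i.e. the square root of the `k`-th largest eigenvalue of `Mᴴ * M`; by convention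
it is `0` for `k = 0` and for `k > m`. -/
def sval {n m : ℕ} (M : Matrix (Fin n) (Fin m) ℝ) (k : ℕ) : ℝ :=
  if h : 1 ≤ k ∧ k ≤ m then
    Real.sqrt ((Matrix.isHermitian_conjTranspose_mul_self M).eigenvalues
      (Tuple.sort (Matrix.isHermitian_conjTranspose_mul_self M).eigenvalues ⟨m - k, by omega⟩))
  else 0

/-- A best rank-`k` approximation of `M` in Frobenius norm (rank-`k` truncated SVD),
with the convention that the rank-`0` truncation is `0`. -/
def trunc {n m : ℕ} (M : Matrix (Fin n) (Fin m) ℝ) (k : ℕ) :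
    Matrix (Fin n) (Fin m) ℝ :=
  if k = 0 then 0
  else Classical.epsilon fun B : Matrix (Fin n) (Fin m) ℝ =>
    B.rank ≤ k ∧ ∀ C : Matrix (Fin n) (Fin m) ℝ, C.rank ≤ k → frob2 (M - B) ≤ frob2 (M - C)

/-- `K_λ = ⌊(nm-1)/λ⌋ ∧ q ∧ m`. -/
def Kfun (n m q : ℕ) (lam : ℝ) : ℕ :=
  min (min (Nat.floor ((((n * m : ℕ) : ℝ) - 1) / lam)) q) m

/-- `σ̂_k² = ‖Y - (PY)_k‖² / (nm - λ k)`. -/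
def sighat2 {n m : ℕ} (Y : Matrix (Fin n) (Fin m) ℝ)
    (P : Matrix (Fin n) (Fin n) ℝ) (lam : ℝ) (k : ℕ) : ℝ :=
  frob2 (Y - trunc (P * Y) k) / (((n * m : ℕ) : ℝ) - lam * k)

/-- The selected rank `k̂ = ∑_{k=1}^{K_λ} 1{d_k²(PY) ≥ λ σ̂_k²}`,
which minimizes `σ̂_k²` over `{0, 1, …, K_λ}`. -/
def khat {n m : ℕ} (Y : Matrix (Fin n) (Fin m) ℝ)
    (P : Matrix (Fin n) (Fin n) ℝ) (q : ℕ) (lam : ℝ) : ℕ :=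
  ∑ k ∈ Finset.Icc 1 (Kfun n m q lam),
    if lam * sighat2 Y P lam k ≤ (sval (P * Y) k) ^ 2 then 1 else 0

/-!
Let `B` be the best rank-`r` approximation of `PY`. It lies in the range of `P`, so by Pythagoras
`‖E‖² - ‖Y - B‖² = ‖PE‖² - ‖PY - B‖²`. This gap is nonnegative because `XA` is a rank-`r`
competitor with `PY - XA = PE`. With `D = B - XA`, of rank at most `2r`, the gap equals
`2⟪PE, D⟫ - ‖D‖² ≤ rank D · d₁²(PE) ≤ 2r d₁²(PE) ≤ λ r σ̂²`; for the middle inequality write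
`D = WQ` with `Q` having orthonormal (or zero) rows, so that the left side is
`‖PE Qᵀ‖² - ‖PE Qᵀ - W‖²`. Hence `‖E‖² - λ r σ̂² ≤ ‖Y - B‖² ≤ ‖E‖²`, and dividing by
`nm - λ r > 0` gives both bounds.
-/

open Matrix

section Frobenius

variable {n m : ℕ}

def frobInner (M N : Matrix (Fin n) (Fin m) ℝ) : ℝ :=
  ∑ i, ∑ j, M i j * N i j

lemma frob2_nonneg (M : Matrix (Fin n) (Fin m) ℝ) : 0 ≤ frob2 M := by
  unfold frob2; positivity

lemma sq_apply_le_frob2 (M : Matrix (Fin n) (Fin m) ℝ) (i : Fin n) (j : Fin m) :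
    M i j ^ 2 ≤ frob2 M :=
  (Finset.single_le_sum (f := fun j => M i j ^ 2) (fun _ _ => sq_nonneg _)
      (Finset.mem_univ j)).trans
    (Finset.single_le_sum (f := fun i => ∑ j, M i j ^ 2) (fun _ _ => by positivity)
      (Finset.mem_univ i))

lemma frob2_eq_zero_iff {M : Matrix (Fin n) (Fin m) ℝ} : frob2 M = 0 ↔ M = 0 := by
  refine ⟨fun h => ext fun i j => ?_, fun h => by simp [h, frob2]⟩
  exact pow_eq_zero_iff two_ne_zero |>.mp
    (le_antisymm (h ▸ sq_apply_le_frob2 M i j) (sq_nonneg _))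

lemma frob2_sub_comm (M N : Matrix (Fin n) (Fin m) ℝ) : frob2 (M - N) = frob2 (N - M) := by
  simp only [frob2, Matrix.sub_apply]
  exact Finset.sum_congr rfl fun i _ => Finset.sum_congr rfl fun j _ => by ring

lemma frob2_add (M N : Matrix (Fin n) (Fin m) ℝ) :
    frob2 (M + N) = frob2 M + 2 * frobInner M N + frob2 N := by
  simp only [frob2, frobInner, Matrix.add_apply, Finset.mul_sum, ← Finset.sum_add_distrib]
  ring_nf

lemma frob2_sub (M N : Matrix (Fin n) (Fin m) ℝ) :
    frob2 (M - N) = frob2 M - 2 * frobInner M N + frob2 N := by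
  simp only [frob2, frobInner, Matrix.sub_apply, Finset.mul_sum, ← Finset.sum_sub_distrib,
    ← Finset.sum_add_distrib]
  ring_nf

lemma frob2_add_le (M N : Matrix (Fin n) (Fin m) ℝ) :
    frob2 (M + N) ≤ 2 * frob2 M + 2 * frob2 N := by
  simp only [frob2, Matrix.add_apply, Finset.mul_sum, ← Finset.sum_add_distrib]
  gcongr with i _ j _
  nlinarith [sq_nonneg (M i j - N i j)]

lemma frobInner_comm (M N : Matrix (Fin n) (Fin m) ℝ) : frobInner M N = frobInner N M := by
  simp only [frobInner, mul_comm]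

lemma frobInner_eq_trace (M N : Matrix (Fin n) (Fin m) ℝ) :
    frobInner M N = trace (Mᵀ * N) := by
  simp only [frobInner, trace, diag, mul_apply, transpose_apply]
  exact Finset.sum_comm

lemma frobInner_mul_left {k : ℕ} (P : Matrix (Fin n) (Fin k) ℝ) (Z : Matrix (Fin k) (Fin m) ℝ)
    (W : Matrix (Fin n) (Fin m) ℝ) : frobInner (P * Z) W = frobInner Z (Pᵀ * W) := by
  rw [frobInner_eq_trace, frobInner_eq_trace, transpose_mul, Matrix.mul_assoc]

lemma frobInner_mul_right {k : ℕ} (M : Matrix (Fin n) (Fin m) ℝ)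
    (W : Matrix (Fin n) (Fin k) ℝ) (Q : Matrix (Fin k) (Fin m) ℝ) :
    frobInner M (W * Q) = frobInner (M * Qᵀ) W := by
  rw [frobInner_eq_trace, frobInner_eq_trace, transpose_mul, transpose_transpose,
    ← Matrix.mul_assoc, trace_mul_comm, Matrix.mul_assoc]

end Frobenius

namespace Matrix

variable {K ι κ : Type*} [Field K] [Fintype κ]

lemma eq_zero_of_rank_eq_zero {A : Matrix ι κ K} (h : A.rank = 0) : A = 0 := by
  have : A.mulVecLin = 0 := LinearMap.range_eq_bot.mp (Submodule.finrank_eq_zero.mp h)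
  rw [← toLin'_apply', ← map_zero toLin'] at this
  exact toLin'.injective this

lemma rank_add_le (A B : Matrix ι κ K) : (A + B).rank ≤ A.rank + B.rank := by
  refine (Submodule.finrank_mono ?_).trans (Submodule.finrank_add_le_finrank_add_finrank
    (LinearMap.range A.mulVecLin) (LinearMap.range B.mulVecLin))
  rintro _ ⟨v, rfl⟩
  rw [mulVecLin_add]
  exact Submodule.add_mem_sup (LinearMap.mem_range_self _ v) (LinearMap.mem_range_self _ v)

end Matrix

lemma Fin.sum_dite_lt_eq {M : Type*} [AddCommMonoid M] {r s : ℕ} (hsr : s ≤ r)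
    (f : Fin s → M) :
    ∑ k : Fin r, (if h : (k : ℕ) < s then f ⟨k, h⟩ else 0) = ∑ t, f t :=
  (Fintype.sum_of_injective (Fin.castLE hsr) (Fin.castLE_injective hsr) _ _
    (fun k hk => dif_neg fun h => hk ⟨⟨k, h⟩, rfl⟩) fun t => by simp).symm

section Factorization

variable {n m : ℕ}

theorem exists_mul_eq_of_rank_le (C : Matrix (Fin n) (Fin m) ℝ) {r : ℕ} (hr : C.rank ≤ r) :
    ∃ (W : Matrix (Fin n) (Fin r) ℝ) (Q : Matrix (Fin r) (Fin m) ℝ),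
      W * Q = C ∧ frob2 W = frob2 C ∧ ∀ k, ∑ j, Q k j ^ 2 ≤ 1 := by
  let row : Fin n → EuclideanSpace ℝ (Fin m) := fun i => WithLp.toLp 2 (C i)
  let V := Submodule.span ℝ (Set.range row)
  have hV : Module.finrank ℝ V = C.rank := by
    have : V = (Submodule.span ℝ (Set.range C.row)).map
        (WithLp.linearEquiv 2 ℝ (Fin m → ℝ)).symm.toLinearMap := by
      rw [Submodule.map_span, ← Set.range_comp]; rfl
    rw [rank_eq_finrank_span_row, this, LinearEquiv.finrank_map_eq]
  set s := Module.finrank ℝ V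
  have hsr : s ≤ r := hV ▸ hr
  let b := stdOrthonormalBasis ℝ V
  let rowV : Fin n → V := fun i => ⟨row i, Submodule.subset_span ⟨i, rfl⟩⟩
  refine ⟨Matrix.of fun i k => if h : (k : ℕ) < s then b.repr (rowV i) ⟨k, h⟩ else 0,
    Matrix.of fun k j =>
      if h : (k : ℕ) < s then (b ⟨k, h⟩ : EuclideanSpace ℝ (Fin m)) j else 0,
    ?_, ?_, fun k => ?_⟩
  · ext i j
    have hrow : row i = ∑ t, b.repr (rowV i) t • (b t : EuclideanSpace ℝ (Fin m)) := by
      simpa only [Submodule.coe_sum, Submodule.coe_smul] using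
        congrArg Subtype.val (b.sum_repr (rowV i)).symm
    have hrowj := congrArg (fun x : EuclideanSpace ℝ (Fin m) => x j) hrow
    simp only [row, WithLp.ofLp_sum, Finset.sum_apply, PiLp.smul_apply, smul_eq_mul] at hrowj
    simp only [mul_apply, of_apply]
    rw [hrowj, ← Fin.sum_dite_lt_eq hsr]
    exact Finset.sum_congr rfl fun k _ => by split_ifs <;> simp
  · refine Finset.sum_congr rfl fun i _ => ?_
    calc ∑ k : Fin r, (if h : (k : ℕ) < s then b.repr (rowV i) ⟨k, h⟩ else 0) ^ 2
        = ∑ t, b.repr (rowV i) t ^ 2 := by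
          rw [← Fin.sum_dite_lt_eq hsr]
          exact Finset.sum_congr rfl fun k _ => by split_ifs <;> simp
      _ = ‖row i‖ ^ 2 := by
          rw [← EuclideanSpace.real_norm_sq_eq, LinearIsometryEquiv.norm_map]
          rfl
      _ = ∑ j, C i j ^ 2 := EuclideanSpace.real_norm_sq_eq _
  · by_cases h : (k : ℕ) < s
    · simp only [of_apply, dif_pos h]
      rw [← EuclideanSpace.real_norm_sq_eq, Submodule.norm_coe, b.orthonormal.1, one_pow]
    · simp [h]

end Factorization

section SingularValue

variable {n m : ℕ}

lemma eigenvalues_le_sval_one_sq (S : Matrix (Fin n) (Fin m) ℝ) (i : Fin m) :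
    (isHermitian_conjTranspose_mul_self S).eigenvalues i ≤ sval S 1 ^ 2 := by
  set μ := (isHermitian_conjTranspose_mul_self S).eigenvalues
  have hm : 1 ≤ m := Nat.one_le_iff_ne_zero.mpr (Fin.pos i).ne'
  have hi : (Tuple.sort μ)⁻¹ i ≤ ⟨m - 1, by omega⟩ :=
    Fin.le_def.mpr (Nat.le_sub_one_of_lt ((Tuple.sort μ)⁻¹ i).isLt)
  rw [sval, dif_pos ⟨le_rfl, hm⟩,
    Real.sq_sqrt ((posSemidef_conjTranspose_mul_self S).eigenvalues_nonneg _)]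
  calc μ i = (μ ∘ Tuple.sort μ) ((Tuple.sort μ)⁻¹ i) := by simp
    _ ≤ (μ ∘ Tuple.sort μ) ⟨m - 1, by omega⟩ := Tuple.monotone_sort μ hi

open scoped MatrixOrder in
lemma dotProduct_mulVec_self_le (S : Matrix (Fin n) (Fin m) ℝ) (y : Fin m → ℝ) :
    (S *ᵥ y) ⬝ᵥ (S *ᵥ y) ≤ sval S 1 ^ 2 * (y ⬝ᵥ y) := by
  have hH := isHermitian_conjTranspose_mul_self S
  have hpsd : (algebraMap ℝ _ (sval S 1 ^ 2) - Sᴴ * S).PosSemidef := by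
    refine le_algebraMap_of_spectrum_le (R := ℝ) (a := Sᴴ * S) ?_
    rw [hH.spectrum_real_eq_range_eigenvalues]
    rintro _ ⟨i, rfl⟩
    exact eigenvalues_le_sval_one_sq S i
  have := hpsd.dotProduct_mulVec_nonneg y
  rw [sub_mulVec, dotProduct_sub, Algebra.algebraMap_eq_smul_one, smul_mulVec, one_mulVec,
    dotProduct_smul, ← mulVec_mulVec, dotProduct_mulVec, conjTranspose_eq_transpose_of_trivial,
    vecMul_transpose] at this
  simpa using this

lemma frob2_mul_transpose_le (S : Matrix (Fin n) (Fin m) ℝ) {k : ℕ}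
    (Q : Matrix (Fin k) (Fin m) ℝ) :
    frob2 (S * Qᵀ) ≤ sval S 1 ^ 2 * frob2 Q := by
  calc frob2 (S * Qᵀ) = ∑ l, (S *ᵥ Q l) ⬝ᵥ (S *ᵥ Q l) := by
        rw [frob2, Finset.sum_comm]
        simp [dotProduct, mulVec, mul_apply, sq]
    _ ≤ ∑ l, sval S 1 ^ 2 * (Q l ⬝ᵥ Q l) :=
        Finset.sum_le_sum fun l _ => dotProduct_mulVec_self_le S (Q l)
    _ = sval S 1 ^ 2 * frob2 Q := by simp [frob2, Finset.mul_sum, dotProduct, sq]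

theorem two_mul_frobInner_sub_frob2_le (S D : Matrix (Fin n) (Fin m) ℝ) :
    2 * frobInner S D - frob2 D ≤ D.rank * sval S 1 ^ 2 := by
  obtain ⟨W, Q, hWQ, hW, hQ⟩ := exists_mul_eq_of_rank_le D le_rfl
  have hQr : frob2 Q ≤ D.rank := (Finset.sum_le_sum fun k _ => hQ k).trans (by simp)
  calc 2 * frobInner S D - frob2 D = 2 * frobInner (S * Qᵀ) W - frob2 W := by
        rw [hW, ← frobInner_mul_right, hWQ]
    _ = frob2 (S * Qᵀ) - frob2 (S * Qᵀ - W) := by rw [frob2_sub]; ring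
    _ ≤ frob2 (S * Qᵀ) := by linarith [frob2_nonneg (S * Qᵀ - W)]
    _ ≤ sval S 1 ^ 2 * frob2 Q := frob2_mul_transpose_le S Q
    _ ≤ D.rank * sval S 1 ^ 2 := by rw [mul_comm]; gcongr

end SingularValue

section BestLowRankApproximation

variable {n m : ℕ}

def factorBox (n m r : ℕ) (c : ℝ) :
    Set (Matrix (Fin n) (Fin r) ℝ × Matrix (Fin r) (Fin m) ℝ) :=
  (Set.univ.pi fun _ => Set.univ.pi fun _ => Set.Icc (-c) c) ×ˢ
    (Set.univ.pi fun _ => Set.univ.pi fun _ => Set.Icc (-1) 1)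

lemma isCompact_factorBox (n m r : ℕ) (c : ℝ) : IsCompact (factorBox n m r c) :=
  (isCompact_univ_pi fun _ => isCompact_univ_pi fun _ => isCompact_Icc).prod
    (isCompact_univ_pi fun _ => isCompact_univ_pi fun _ => isCompact_Icc)

lemma exists_mem_factorBox_mul_eq {C : Matrix (Fin n) (Fin m) ℝ} {r : ℕ} (hC : C.rank ≤ r)
    {c : ℝ} (hc0 : 0 ≤ c) (hc : frob2 C ≤ c ^ 2) :
    ∃ x ∈ factorBox n m r c, x.1 * x.2 = C := by
  obtain ⟨W, Q, hWQ, hW, hQ⟩ := exists_mul_eq_of_rank_le C hC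
  refine ⟨(W, Q), ⟨fun i _ k _ => ?_, fun k _ j _ => ?_⟩, hWQ⟩
  · exact abs_le_of_sq_le_sq' ((sq_apply_le_frob2 W i k).trans (hW ▸ hc)) hc0
  · refine abs_le_of_sq_le_sq' ?_ zero_le_one
    calc Q k j ^ 2 ≤ ∑ j', Q k j' ^ 2 :=
          Finset.single_le_sum (f := fun j' => Q k j' ^ 2) (fun _ _ => sq_nonneg _)
            (Finset.mem_univ j)
      _ ≤ 1 ^ 2 := by rw [one_pow]; exact hQ k

-- The rank-`≤ r` matrices that approximate `M` at least as well as `0` satisfy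
-- `‖C‖² ≤ 4‖M‖²`, hence factor through the compact set `factorBox n m r c`.
theorem exists_rank_le_forall_frob2_sub_le (M : Matrix (Fin n) (Fin m) ℝ) (r : ℕ) :
    ∃ B : Matrix (Fin n) (Fin m) ℝ, B.rank ≤ r ∧
      ∀ C : Matrix (Fin n) (Fin m) ℝ, C.rank ≤ r → frob2 (M - B) ≤ frob2 (M - C) := by
  set c := √(4 * frob2 M)
  have h0 :
      ((0, 0) : Matrix (Fin n) (Fin r) ℝ × Matrix (Fin r) (Fin m) ℝ) ∈ factorBox n m r c :=
    ⟨fun _ _ _ _ => by simp [c], fun _ _ _ _ => by simp⟩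
  have hcont : Continuous fun x : Matrix (Fin n) (Fin r) ℝ × Matrix (Fin r) (Fin m) ℝ =>
      frob2 (M - x.1 * x.2) := by
    unfold frob2; fun_prop
  obtain ⟨x, -, hx⟩ :=
    (isCompact_factorBox n m r c).exists_isMinOn ⟨_, h0⟩ hcont.continuousOn
  refine ⟨x.1 * x.2, (rank_mul_le_left _ _).trans (rank_le_width _), fun C hC => ?_⟩
  by_cases hMC : frob2 (M - C) ≤ frob2 M
  · have hCc : frob2 C ≤ c ^ 2 := by
      rw [Real.sq_sqrt (by linarith [frob2_nonneg M])]
      have := frob2_add_le M (C - M)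
      rw [add_sub_cancel, frob2_sub_comm] at this
      linarith
    obtain ⟨y, hy, rfl⟩ := exists_mem_factorBox_mul_eq hC (Real.sqrt_nonneg _) hCc
    exact hx hy
  · have h := isMinOn_iff.mp hx _ h0
    rw [Matrix.mul_zero, sub_zero] at h
    linarith

theorem trunc_spec (M : Matrix (Fin n) (Fin m) ℝ) (k : ℕ) :
    (trunc M k).rank ≤ k ∧
      ∀ C : Matrix (Fin n) (Fin m) ℝ, C.rank ≤ k →
        frob2 (M - trunc M k) ≤ frob2 (M - C) := by
  unfold trunc
  split_ifs with hk
  · subst hk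
    refine ⟨by simp, fun C hC => ?_⟩
    rw [eq_zero_of_rank_eq_zero (Nat.le_zero.mp hC)]
  · exact Classical.epsilon_spec (exists_rank_le_forall_frob2_sub_le M k)

end BestLowRankApproximation

section OrthogonalProjection

variable {n m : ℕ} {P : Matrix (Fin n) (Fin n) ℝ}

lemma frobInner_mul_sub_mul_eq_zero (hP2 : P * P = P) (hPt : Pᵀ = P)
    (Z W : Matrix (Fin n) (Fin m) ℝ) : frobInner (P * Z) (W - P * W) = 0 := by
  rw [frobInner_mul_left, hPt, Matrix.mul_sub, ← Matrix.mul_assoc, hP2, sub_self]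
  simp [frobInner]

lemma frob2_sub_eq_add_of_mul_eq (hP2 : P * P = P) (hPt : Pᵀ = P)
    (W : Matrix (Fin n) (Fin m) ℝ) {C : Matrix (Fin n) (Fin m) ℝ} (hC : P * C = C) :
    frob2 (W - C) = frob2 (W - P * W) + frob2 (P * W - C) := by
  have h : W - C = (W - P * W) + P * (W - C) := by rw [Matrix.mul_sub, hC]; abel
  rw [h, frob2_add, frobInner_comm, frobInner_mul_sub_mul_eq_zero hP2 hPt, Matrix.mul_sub, hC]
  ring

lemma mul_eq_self_of_forall_frob2_sub_le (hP2 : P * P = P) (hPt : Pᵀ = P)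
    {W B : Matrix (Fin n) (Fin m) ℝ} {k : ℕ} (hB : B.rank ≤ k)
    (hmin : ∀ C : Matrix (Fin n) (Fin m) ℝ, C.rank ≤ k →
      frob2 (P * W - B) ≤ frob2 (P * W - C)) :
    P * B = B := by
  have hle := hmin (P * B) ((rank_mul_le_right P B).trans hB)
  have hsplit :=
    frob2_sub_eq_add_of_mul_eq hP2 hPt B (C := P * W) (by rw [← Matrix.mul_assoc, hP2])
  rw [frob2_sub_comm B, frob2_sub_comm (P * B)] at hsplit
  have h0 : frob2 (B - P * B) = 0 := le_antisymm (by linarith) (frob2_nonneg _)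
  exact (sub_eq_zero.mp (frob2_eq_zero_iff.mp h0)).symm

lemma mul_trunc_mul (hP2 : P * P = P) (hPt : Pᵀ = P) (W : Matrix (Fin n) (Fin m) ℝ) (k : ℕ) :
    P * trunc (P * W) k = trunc (P * W) k :=
  mul_eq_self_of_forall_frob2_sub_le hP2 hPt (trunc_spec (P * W) k).1 (trunc_spec (P * W) k).2

end OrthogonalProjection

section ReducedRankRegression

variable {n m p : ℕ} {X : Matrix (Fin n) (Fin p) ℝ} {A : Matrix (Fin p) (Fin m) ℝ}
  {E Y : Matrix (Fin n) (Fin m) ℝ} {P : Matrix (Fin n) (Fin n) ℝ}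

lemma frob2_sub_frob2_sub_trunc (hY : Y = X * A + E) (hP2 : P * P = P) (hPt : Pᵀ = P)
    (hPX : P * X = X) (k : ℕ) :
    frob2 E - frob2 (Y - trunc (P * Y) k) =
      frob2 (P * E) - frob2 (P * Y - trunc (P * Y) k) := by
  have hres : Y - P * Y = E - P * E := by
    rw [hY, Matrix.mul_add, ← Matrix.mul_assoc, hPX]; abel
  have hE := frob2_sub_eq_add_of_mul_eq hP2 hPt E (C := 0) (Matrix.mul_zero P)
  rw [frob2_sub_eq_add_of_mul_eq hP2 hPt Y (mul_trunc_mul hP2 hPt Y k), hres]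
  simp only [sub_zero] at hE
  linarith

lemma frob2_mul_sub_trunc_le (hY : Y = X * A + E) (hPX : P * X = X) :
    frob2 (P * Y - trunc (P * Y) A.rank) ≤ frob2 (P * E) := by
  have hPE : P * Y - X * A = P * E := by
    rw [hY, Matrix.mul_add, ← Matrix.mul_assoc, hPX, add_sub_cancel_left]
  exact hPE ▸ (trunc_spec (P * Y) A.rank).2 (X * A) (rank_mul_le_right X A)

lemma frob2_mul_sub_frob2_mul_sub_trunc_le (hY : Y = X * A + E) (hPX : P * X = X) :
    frob2 (P * E) - frob2 (P * Y - trunc (P * Y) A.rank) ≤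
      2 * A.rank * sval (P * E) 1 ^ 2 := by
  set B := trunc (P * Y) A.rank
  set D := B - X * A
  have hPY : P * Y - B = P * E - D := by
    simp only [D]
    rw [hY, Matrix.mul_add, ← Matrix.mul_assoc, hPX]; abel
  have hD : (D.rank : ℝ) ≤ 2 * A.rank := by
    have h : D.rank ≤ A.rank + A.rank := by
      rw [show D = B + (-X) * A by rw [Matrix.neg_mul, ← sub_eq_add_neg]]
      exact (rank_add_le _ _).trans
        (add_le_add (trunc_spec (P * Y) A.rank).1 (rank_mul_le_right _ _))
    rw [two_mul]; exact_mod_cast h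
  calc frob2 (P * E) - frob2 (P * Y - B) = 2 * frobInner (P * E) D - frob2 D := by
        rw [hPY, frob2_sub]; ring
    _ ≤ D.rank * sval (P * E) 1 ^ 2 := two_mul_frobInner_sub_frob2_le _ _
    _ ≤ 2 * A.rank * sval (P * E) 1 ^ 2 := by gcongr

end ReducedRankRegression

lemma mul_rank_lt_of_le_Kfun {n m q r : ℕ} {lam : ℝ} (hlam : 0 < lam) (hnm : 0 < n * m)
    (hr : r ≤ Kfun n m q lam) : lam * r < ((n * m : ℕ) : ℝ) := by
  have hN : (1 : ℝ) ≤ ((n * m : ℕ) : ℝ) := by exact_mod_cast hnm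
  have hr' : (r : ℝ) ≤ (((n * m : ℕ) : ℝ) - 1) / lam :=
    (Nat.cast_le.mpr (hr.trans ((min_le_left _ _).trans (min_le_left _ _)))).trans
      (Nat.floor_le (div_nonneg (by linarith) hlam.le))
  rw [le_div_iff₀ hlam] at hr'
  linarith

theorem statement_6_general
    {n m p q : ℕ}
    (X : Matrix (Fin n) (Fin p) ℝ) (A : Matrix (Fin p) (Fin m) ℝ)
    (E Y : Matrix (Fin n) (Fin m) ℝ)
    (P : Matrix (Fin n) (Fin n) ℝ)
    (hY : Y = X * A + E)
    (hP2 : P * P = P) (hPt : P.transpose = P) (hPX : P * X = X)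
    (lam : ℝ) (hlam : 0 < lam)
    (hrK : A.rank ≤ Kfun n m q lam)
    (hev : 2 * (sval (P * E) 1) ^ 2 ≤ lam * (frob2 E / ((n * m : ℕ) : ℝ))) :
    frob2 E / ((n * m : ℕ) : ℝ) ≤ sighat2 Y P lam A.rank ∧
    sighat2 Y P lam A.rank ≤
      ((n * m : ℕ) : ℝ) / (((n * m : ℕ) : ℝ) - lam * A.rank) *
        (frob2 E / ((n * m : ℕ) : ℝ)) := by
  rcases Nat.eq_zero_or_pos (n * m) with hnm | hnm
  · rcases Nat.mul_eq_zero.mp hnm with rfl | rfl <;> simp [sighat2, frob2]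
  set N : ℝ := ((n * m : ℕ) : ℝ)
  set R := frob2 (Y - trunc (P * Y) A.rank)
  have hN : 0 < N := Nat.cast_pos.mpr hnm
  have hd : 0 < N - lam * A.rank := sub_pos.mpr (mul_rank_lt_of_le_Kfun hlam hnm hrK)
  have hgap := frob2_sub_frob2_sub_trunc hY hP2 hPt hPX A.rank
  have hup : R ≤ frob2 E := by linarith [frob2_mul_sub_trunc_le hY hPX (P := P)]
  have hlow : frob2 E - R ≤ lam * A.rank * (frob2 E / N) := by
    have hev' := mul_le_mul_of_nonneg_left hev (Nat.cast_nonneg A.rank)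
    linarith [frob2_mul_sub_frob2_mul_sub_trunc_le hY hPX (P := P)]
  constructor
  · rw [sighat2, div_le_div_iff₀ hN hd]
    have := mul_le_mul_of_nonneg_right hlow hN.le
    rw [mul_assoc, div_mul_cancel₀ _ hN.ne'] at this
    linarith
  · rw [sighat2, div_mul_div_comm, mul_comm N, mul_div_mul_right _ _ hN.ne']
    gcongr

theorem statement_6
    {n m p q : ℕ}
    (X : Matrix (Fin n) (Fin p) ℝ) (A : Matrix (Fin p) (Fin m) ℝ)
    (E Y : Matrix (Fin n) (Fin m) ℝ)
    (P : Matrix (Fin n) (Fin n) ℝ)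
    (hY : Y = X * A + E)
    (hP2 : P * P = P) (hPt : P.transpose = P) (hPX : P * X = X)
    (hq : X.rank = q) (hPq : P.rank = q)
    (lam : ℝ) (hlam : 0 < lam)
    (hrK : A.rank ≤ Kfun n m q lam)
    (hev : 2 * (sval (P * E) 1) ^ 2 ≤ lam * (frob2 E / ((n * m : ℕ) : ℝ))) :
    frob2 E / ((n * m : ℕ) : ℝ) ≤ sighat2 Y P lam A.rank ∧
    sighat2 Y P lam A.rank ≤
      ((n * m : ℕ) : ℝ) / (((n * m : ℕ) : ℝ) - lam * A.rank) *
        (frob2 E / ((n * m : ℕ) : ℝ)) :=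
  statement_6_general X A E Y P hY hP2 hPt hPX lam hlam hrK hev

end
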